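/- Let Φ be a finite list of nonzero elements of Λ spanning V, let Y ∈ V be polarizing for Φ, let T be a Φ-tope, and let q : Λ → ℂ be a quasi-polynomial function coinciding with Θ[Φ↑Y] on T ∩ Λ. Let φ₀ be an entry of Φ and set Φ' = Φ − {φ₀} (the list Φ with the multiplicity of φ₀ decreased by one). (i) If Φ' spans V, let T' be the Φ'-tope containing T, and let q' : Λ → ℂ be a quasi-polynomial function coinciding with Θ[Φ'↑Y] on T' ∩ Λ; then q(λ) − q(λ − φ₀) = q'(λ) for every λ ∈ Λ. (ii) If Φ' does not span V, then q(λ) − q(λ − φ₀) = 0 for every λ ∈ Λ. -/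

import Mathlib

noncomputable section

open Module

variable {V : Type*} [NormedAddCommGroup V] [InnerProductSpace ℝ V] [FiniteDimensional ℝ V]

/-- A full-rank lattice: a free `ℤ`-submodule of rank `dim V` that spans `V` over `ℝ`. -/
def IsLattice (Λ : Submodule ℤ V) : Prop :=
  Submodule.span ℝ (Λ : Set V) = ⊤ ∧ Nonempty (Basis (Fin (finrank ℝ V)) ℤ Λ)

/-- Filter a list by a (classical) predicate. -/
def filterP (Φ : List V) (P : V → Prop) : List V :=
  Φ.filter fun v => @decide (P v) (Classical.propDecidable _)

/-- A vector `Y` is polarizing for the list `Φ` if `(φ, Y) ≠ 0` for every entry `φ`. -/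
def Polarizing (Φ : List V) (Y : V) : Prop := ∀ φ ∈ Φ, (inner ℝ φ Y : ℝ) ≠ 0

/-- The partition function `Θ[Φ↑Y] : V → ℤ`. -/
def theta (Φ : List V) (Y : V) (lam : V) : ℤ :=
  (-1 : ℤ) ^ (filterP Φ (fun φ => (inner ℝ φ Y : ℝ) < 0)).length *
    (Set.ncard {n : Fin Φ.length → ℕ |
      ∑ i : Fin Φ.length,
        (if (0 : ℝ) < (inner ℝ (Φ.get i) Y : ℝ) then ((n i : ℤ) • Φ.get i)
         else (-(((n i : ℤ) + 1) • Φ.get i))) = lam} : ℤ)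

/-- Polynomial functions on a real vector space, with values in `ℂ`:
the subalgebra of functions generated by (complexified) real linear functionals. -/
def IsPolyFun {W : Type*} [AddCommGroup W] [Module ℝ W] (p : W → ℂ) : Prop :=
  p ∈ Algebra.adjoin ℂ {g : W → ℂ | ∃ l : W →ₗ[ℝ] ℝ, g = fun w => ((l w : ℝ) : ℂ)}

/-- A function is quasi-polynomial on the lattice `Ξ` if there is a finite-index
sublattice `Ξ₀` such that on every coset `ξ + Ξ₀` of a lattice point `ξ ∈ Ξ`, the function
agrees with a polynomial function. -/
def IsQuasiPoly {W : Type*} [AddCommGroup W] [Module ℝ W] (Ξ : Submodule ℤ W) (f : W → ℂ) :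
    Prop :=
  ∃ Ξ₀ : Submodule ℤ W, Ξ₀ ≤ Ξ ∧ (∃ N : ℕ, 0 < N ∧ ∀ v ∈ Ξ, (N : ℤ) • v ∈ Ξ₀) ∧
    ∀ ξ ∈ Ξ, ∃ p : W → ℂ, IsPolyFun p ∧ ∀ μ ∈ Ξ₀, f (ξ + μ) = p (ξ + μ)

/-- `γ` is `Φ`-regular: it lies in the span of `Φ` and is not a linear combination of fewer
than `dim span Φ` elements of `Φ`. -/
def PhiRegular (Φ : List V) (γ : V) : Prop :=
  γ ∈ Submodule.span ℝ {v | v ∈ Φ} ∧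
    ¬∃ s : Finset V, ↑s ⊆ {v | v ∈ Φ} ∧
      s.card < finrank ℝ (Submodule.span ℝ {v | v ∈ Φ}) ∧ γ ∈ Submodule.span ℝ (s : Set V)

/-- A `Φ`-tope: a connected component of the set of `Φ`-regular elements. -/
def IsTope (Φ : List V) (T : Set V) : Prop :=
  ∃ γ, PhiRegular Φ γ ∧ T = connectedComponentIn {x | PhiRegular Φ x} γ

/-- An alcove for the data `(μ_p, Φ_p)`: a connected component of the set of `γ` such that
`γ - μ p` is `Φ p`-regular for all `p`. -/
def IsAlcove {F : Type*} (μ : F → V) (Φ : F → List V) (A : Set V) : Prop :=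
  ∃ γ, (∀ p, PhiRegular (Φ p) (γ - μ p)) ∧
    A = connectedComponentIn {x | ∀ p, PhiRegular (Φ p) (x - μ p)} γ

/-! The partition function satisfies `Θ[Φ](λ) - Θ[Φ](λ - φ₀) = Θ[Φ'](λ)` for every `λ`: split the
solutions according to whether the coefficient of `φ₀` is zero or can be lowered by one. When `Φ'`
does not span, `Θ[Φ']` vanishes on `T`, whose points avoid the proper subspace `span Φ'`. So in
both cases a quasi-polynomial difference vanishes at the lattice points of `T ∩ (T + φ₀)`. Topes
are open cones, so this set contains arbitrarily large balls; and a quasi-polynomial vanishing at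
the lattice points of arbitrarily large balls is zero, because on each coset of its sublattice it
is a polynomial vanishing on boxes of side larger than its degree. -/

namespace MvPolynomial

theorem eq_zero_of_eval_zero_on_box {R σ : Type*} [CommRing R] [IsDomain R] [CharZero R]
    [Finite σ] (P : MvPolynomial σ R) (c : σ → R)
    (h : ∀ k : σ → ℕ, (∀ i, k i ≤ P.totalDegree) → eval (c + fun i => (k i : R)) P = 0) :
    P = 0 := by
  classical
  set S : σ → Finset R := fun i => (Finset.range (P.totalDegree + 1)).image fun j : ℕ => c i + j
  have hinj (i : σ) : Function.Injective fun j : ℕ => c i + j :=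
    (add_right_injective (c i)).comp Nat.cast_injective
  refine eq_zero_of_eval_zero_at_prod_finset P S (fun i => ?_) fun x hx => ?_
  · rw [Finset.card_image_of_injective _ (hinj i), Finset.card_range]
    exact Nat.lt_succ_of_le (degreeOf_le_totalDegree P i)
  · choose k hk hkx using fun i => Finset.mem_image.mp (hx i)
    obtain rfl : x = c + fun i => (k i : R) := by ext i; exact (hkx i).symm
    exact h k fun i => Nat.lt_succ_iff.mp (Finset.mem_range.mp (hk i))

end MvPolynomial

section PolyFun

variable {W : Type*} [AddCommGroup W] [Module ℝ W]

theorem IsPolyFun.comp_sub_const {p : W → ℂ} (hp : IsPolyFun p) (w : W) :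
    IsPolyFun fun v => p (v - w) := by
  induction hp using Algebra.adjoin_induction with
  | mem g hg =>
    obtain ⟨l, rfl⟩ := hg
    have : (fun v => ((l (v - w) : ℝ) : ℂ)) =
        (fun v => ((l v : ℝ) : ℂ)) - algebraMap ℂ _ (l w) := by
      funext v; simp
    rw [IsPolyFun, this]
    exact Subalgebra.sub_mem _ (Algebra.subset_adjoin ⟨l, rfl⟩) (Subalgebra.algebraMap_mem _ _)
  | algebraMap r => exact Subalgebra.algebraMap_mem _ r
  | add _ _ _ _ hp hq => exact Subalgebra.add_mem _ hp hq
  | mul _ _ _ _ hp hq => exact Subalgebra.mul_mem _ hp hq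

theorem IsPolyFun.exists_mvPolynomial {ι : Type*} [Fintype ι] {p : W → ℂ} (hp : IsPolyFun p)
    (b : Basis ι ℝ W) :
    ∃ P : MvPolynomial ι ℂ, ∀ w, p w = MvPolynomial.eval (fun i => (b.repr w i : ℂ)) P := by
  induction hp using Algebra.adjoin_induction with
  | mem g hg =>
    obtain ⟨l, rfl⟩ := hg
    refine ⟨∑ i, MvPolynomial.C (l (b i) : ℂ) * MvPolynomial.X i, fun w => ?_⟩
    have hl : l w = ∑ i, b.repr w i * l (b i) := by
      conv_lhs => rw [← b.sum_repr w]
      simp only [map_sum, map_smul, smul_eq_mul]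
    simp [hl, mul_comm]
  | algebraMap r => exact ⟨MvPolynomial.C r, by simp⟩
  | add _ _ _ _ hp hq =>
    obtain ⟨P, hP⟩ := hp
    obtain ⟨Q, hQ⟩ := hq
    exact ⟨P + Q, fun w => by simp [hP, hQ]⟩
  | mul _ _ _ _ hp hq =>
    obtain ⟨P, hP⟩ := hp
    obtain ⟨Q, hQ⟩ := hq
    exact ⟨P * Q, fun w => by simp [hP, hQ]⟩

theorem IsPolyFun.eq_zero_of_forall_box {ι : Type*} [Fintype ι] {p : W → ℂ} (hp : IsPolyFun p)
    (b : Basis ι ℝ W)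
    (h : ∀ M : ℕ, ∃ z : W, ∀ k : ι → ℕ, (∀ i, k i ≤ M) → p (z + ∑ i, (k i : ℝ) • b i) = 0) :
    p = 0 := by
  obtain ⟨P, hP⟩ := hp.exists_mvPolynomial b
  obtain ⟨z, hz⟩ := h P.totalDegree
  have hP0 : P = 0 := by
    refine P.eq_zero_of_eval_zero_on_box (fun i => (b.repr z i : ℂ)) fun k hk => ?_
    rw [← hz k hk, hP]
    congr 2
    funext i
    rw [map_add, Finsupp.add_apply, b.repr_sum_self]
    push_cast
    rfl
  funext w
  rw [hP, hP0, map_zero, Pi.zero_apply]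

variable {Ξ : Submodule ℤ W}

theorem IsQuasiPoly.zero : IsQuasiPoly Ξ 0 :=
  ⟨Ξ, le_rfl, ⟨1, one_pos, fun v hv => by simpa using hv⟩,
    fun _ _ => ⟨0, Subalgebra.zero_mem _, fun _ _ => rfl⟩⟩

theorem IsQuasiPoly.sub {f g : W → ℂ} (hf : IsQuasiPoly Ξ f) (hg : IsQuasiPoly Ξ g) :
    IsQuasiPoly Ξ (f - g) := by
  obtain ⟨A, hAΞ, ⟨N, hN, hNA⟩, hfA⟩ := hf
  obtain ⟨B, hBΞ, ⟨M, hM, hMB⟩, hgB⟩ := hg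
  refine ⟨A ⊓ B, inf_le_left.trans hAΞ, ⟨N * M, Nat.mul_pos hN hM, fun v hv => ⟨?_, ?_⟩⟩,
    fun ξ hξ => ?_⟩
  · rw [Nat.cast_mul, mul_smul]
    exact hNA _ (Ξ.smul_mem _ hv)
  · rw [Nat.cast_mul, mul_comm, mul_smul]
    exact hMB _ (Ξ.smul_mem _ hv)
  · obtain ⟨p, hp, hfp⟩ := hfA ξ hξ
    obtain ⟨q, hq, hgq⟩ := hgB ξ hξ
    exact ⟨p - q, Subalgebra.sub_mem _ hp hq, fun μ hμ => by
      simp only [Pi.sub_apply, hfp μ hμ.1, hgq μ hμ.2]⟩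

theorem IsQuasiPoly.comp_sub_const {f : W → ℂ} (hf : IsQuasiPoly Ξ f) {w : W} (hw : w ∈ Ξ) :
    IsQuasiPoly Ξ fun v => f (v - w) := by
  obtain ⟨A, hAΞ, hA, hfA⟩ := hf
  refine ⟨A, hAΞ, hA, fun ξ hξ => ?_⟩
  obtain ⟨p, hp, hfp⟩ := hfA (ξ - w) (Ξ.sub_mem hξ hw)
  refine ⟨fun v => p (v - w), hp.comp_sub_const w, fun μ hμ => ?_⟩
  simpa only [sub_add_eq_add_sub] using hfp μ hμ

theorem Submodule.span_real_eq_top_of_smul_mem {Λ Ξ : Submodule ℤ W}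
    (hΛ : Submodule.span ℝ (Λ : Set W) = ⊤) {N : ℕ} (hN : 0 < N)
    (hNΞ : ∀ v ∈ Λ, (N : ℤ) • v ∈ Ξ) : Submodule.span ℝ (Ξ : Set W) = ⊤ := by
  refine eq_top_iff.mpr (hΛ ▸ Submodule.span_le.mpr fun v hv => ?_)
  have hN' : (N : ℝ) ≠ 0 := Nat.cast_ne_zero.mpr hN.ne'
  rw [← inv_smul_smul₀ hN' v, ← Int.cast_natCast, Int.cast_smul_eq_zsmul]
  exact Submodule.smul_mem _ _ (Submodule.subset_span (hNΞ v hv))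

end PolyFun

section Vanishing

variable {E : Type*} [NormedAddCommGroup E] [NormedSpace ℝ E] [FiniteDimensional ℝ E]

theorem IsQuasiPoly.eq_zero_of_forall_ball {Λ : Submodule ℤ E}
    (hΛ : Submodule.span ℝ (Λ : Set E) = ⊤) {f : E → ℂ} (hf : IsQuasiPoly Λ f)
    (h : ∀ R : ℝ, ∃ x : E, ∀ v ∈ Λ, dist v x < R → f v = 0) : ∀ v ∈ Λ, f v = 0 := by
  intro lam hlam
  obtain ⟨Ξ, hΞΛ, ⟨N, hN, hNΞ⟩, hfΞ⟩ := hf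
  obtain ⟨p, hp, hfp⟩ := hfΞ lam hlam
  have hspan := Submodule.span_real_eq_top_of_smul_mem hΛ hN hNΞ
  set b := Basis.ofSpan hspan.ge
  have hbΞ : Submodule.span ℤ (Set.range b) ≤ Ξ :=
    Submodule.span_le.mpr (Basis.ofSpan_subset hspan.ge)
  have : Finite _ := Module.Finite.finite_basis b
  have := Fintype.ofFinite
  suffices p = 0 by simpa [this] using hfp 0 Ξ.zero_mem
  refine hp.eq_zero_of_forall_box b fun M => ?_
  set C := ∑ i, ‖b i‖
  obtain ⟨x, hx⟩ := h ((M + 1) * C + 1)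
  -- `lam + u` is a point of `lam + Ξ` within `C` of `x`
  set u : E := (ZSpan.floor b (x - lam) : E)
  refine ⟨lam + u, fun k hk => ?_⟩
  have hbox : ∑ i, (k i : ℝ) • b i ∈ Submodule.span ℤ (Set.range b) :=
    Submodule.sum_mem _ fun i _ => by
      rw [Nat.cast_smul_eq_nsmul]
      exact nsmul_mem (Submodule.subset_span (Set.mem_range_self i)) _
  have hmem : u + ∑ i, (k i : ℝ) • b i ∈ Ξ := hbΞ (add_mem (ZSpan.floor b (x - lam)).2 hbox)
  rw [add_assoc, ← hfp _ hmem]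
  refine hx _ (add_mem hlam (hΞΛ hmem)) ?_
  have hnorm : ‖∑ i, (k i : ℝ) • b i‖ ≤ M * C := by
    refine (norm_sum_le _ _).trans ?_
    rw [Finset.mul_sum]
    refine Finset.sum_le_sum fun i _ => ?_
    rw [norm_smul, Real.norm_natCast]
    exact mul_le_mul_of_nonneg_right (by exact_mod_cast hk i) (norm_nonneg _)
  calc dist (lam + (u + ∑ i, (k i : ℝ) • b i)) x
      = ‖∑ i, (k i : ℝ) • b i - ZSpan.fract b (x - lam)‖ := by
        rw [dist_eq_norm, ZSpan.fract_apply]; congr 1; abel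
    _ ≤ M * C + C := (norm_sub_le _ _).trans (add_le_add hnorm (ZSpan.norm_fract_le _ _))
    _ < (M + 1) * C + 1 := by linarith

end Vanishing

section Theta

variable {E : Type*} [NormedAddCommGroup E] [InnerProductSpace ℝ E] (Y : E)

def thetaSummand (φ : E) (m : ℕ) : E :=
  if (0 : ℝ) < (inner ℝ φ Y : ℝ) then ((m : ℤ) • φ) else (-(((m : ℤ) + 1) • φ))

def polarized (φ : E) : E := if (0 : ℝ) < (inner ℝ φ Y : ℝ) then φ else -φ

def thetaSolutions {ι : Type*} [Fintype ι] (g : ι → E) (lam : E) : Set (ι → ℕ) :=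
  {n | ∑ i, thetaSummand Y (g i) (n i) = lam}

theorem theta_eq_ncard (Φ : List E) (lam : E) :
    theta Φ Y lam = (-1 : ℤ) ^ (filterP Φ (fun φ => (inner ℝ φ Y : ℝ) < 0)).length *
      ((thetaSolutions Y Φ.get lam).ncard : ℤ) := rfl

variable {Y}

theorem thetaSummand_succ (φ : E) (m : ℕ) :
    thetaSummand Y φ (m + 1) = thetaSummand Y φ m + polarized Y φ := by
  unfold thetaSummand polarized
  split_ifs <;> simp only [Nat.cast_succ, add_smul, one_smul, neg_add]

theorem mul_abs_inner_le_inner_thetaSummand (φ : E) (m : ℕ) :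
    m * |(inner ℝ φ Y : ℝ)| ≤ inner ℝ (thetaSummand Y φ m) Y := by
  unfold thetaSummand
  split_ifs with hpos
  · rw [← Int.cast_smul_eq_zsmul ℝ, real_inner_smul_left, abs_of_pos hpos]
    push_cast
    exact le_rfl
  · rw [inner_neg_left, ← Int.cast_smul_eq_zsmul ℝ, real_inner_smul_left,
      abs_of_nonpos (not_lt.mp hpos)]
    push_cast
    nlinarith [not_lt.mp hpos]

theorem thetaSolutions_finite {ι : Type*} [Fintype ι] {g : ι → E}
    (hY : ∀ i, (inner ℝ (g i) Y : ℝ) ≠ 0) (lam : E) : (thetaSolutions Y g lam).Finite := by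
  refine (Set.Finite.pi fun j => Set.finite_Iic
    ⌈(inner ℝ lam Y : ℝ) / |(inner ℝ (g j) Y : ℝ)|⌉₊).subset fun n hn j _ => ?_
  have hterm i := mul_abs_inner_le_inner_thetaSummand (Y := Y) (g i) (n i)
  have hsum : ∑ i, (inner ℝ (thetaSummand Y (g i) (n i)) Y : ℝ) = inner ℝ lam Y := by
    rw [← sum_inner, hn]
  have hj : (n j : ℝ) * |(inner ℝ (g j) Y : ℝ)| ≤ inner ℝ lam Y :=
    hsum ▸ (hterm j).trans (Finset.single_le_sum (fun i _ => (by positivity : (0 : ℝ) ≤ _).trans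
      (hterm i)) (Finset.mem_univ j))
  have hj' : (n j : ℝ) ≤ (inner ℝ lam Y : ℝ) / |(inner ℝ (g j) Y : ℝ)| :=
    (le_div_iff₀ (abs_pos.mpr (hY j))).mpr hj
  exact_mod_cast hj'.trans (Nat.le_ceil _)

theorem ncard_thetaSolutions_comp_equiv {ι κ : Type*} [Fintype ι] [Fintype κ] (e : ι ≃ κ)
    (g : κ → E) (lam : E) :
    (thetaSolutions Y (g ∘ e) lam).ncard = (thetaSolutions Y g lam).ncard := by
  set e' := e.arrowCongr (Equiv.refl ℕ)
  have : thetaSolutions Y (g ∘ e) lam = e' ⁻¹' thetaSolutions Y g lam := by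
    ext n
    simp only [thetaSolutions, Set.mem_preimage, Set.mem_ofPred_eq, ← e.sum_comp, e',
      Equiv.arrowCongr_apply, Function.comp_apply, Equiv.symm_apply_apply, Equiv.refl_apply]
  rw [this, Set.ncard_preimage_of_injective_subset_range e'.injective
    (e'.surjective.range_eq ▸ Set.subset_univ _)]

theorem theta_perm {Φ₁ Φ₂ : List E} (h : Φ₁.Perm Φ₂) (lam : E) :
    theta Φ₁ Y lam = theta Φ₂ Y lam := by
  classical
  set e := Equiv.ofBijective h.idxBij ⟨h.idxBij_injective, h.idxBij_surjective⟩
  have hget : Φ₂.get ∘ e = Φ₁.get := funext fun i => h.getElem_idxBij_eq_getElem i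
  rw [theta_eq_ncard, theta_eq_ncard, ← hget, ncard_thetaSolutions_comp_equiv, filterP, filterP,
    (h.filter _).length_eq]

theorem cons_mem_thetaSolutions {m : ℕ} (g : Fin (m + 1) → E) (k : ℕ) (t : Fin m → ℕ)
    (lam : E) : Fin.cons k t ∈ thetaSolutions Y g lam ↔
      t ∈ thetaSolutions Y (Fin.tail g) (lam - thetaSummand Y (g 0) k) := by
  simp only [thetaSolutions, Set.mem_ofPred_eq, Fin.sum_univ_succ, Fin.cons_zero, Fin.cons_succ,
    Fin.tail, eq_sub_iff_add_eq, add_comm]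

theorem Fin.injective_cons_succ_tail {m : ℕ} :
    Function.Injective fun n : Fin (m + 1) → ℕ =>
      (Fin.cons (n 0 + 1) (Fin.tail n) : Fin (m + 1) → ℕ) := by
  intro n n' h
  obtain ⟨h0, htail⟩ := Fin.cons_inj.mp h
  rw [← Fin.cons_self_tail n, ← Fin.cons_self_tail n', Nat.succ_injective h0, htail]

theorem thetaSolutions_fin_succ {m : ℕ} (g : Fin (m + 1) → E) (lam : E) :
    thetaSolutions Y g lam =
      Fin.cons 0 '' thetaSolutions Y (Fin.tail g) (lam - thetaSummand Y (g 0) 0) ∪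
      (fun n => Fin.cons (n 0 + 1) (Fin.tail n)) ''
        thetaSolutions Y g (lam - polarized Y (g 0)) := by
  ext n
  induction n using Fin.consCases with
  | cons k t =>
  rw [Set.mem_union, cons_mem_thetaSolutions]
  cases k with
  | zero =>
    rw [(Fin.cons_right_injective 0).mem_set_image]
    simp [Fin.cons_inj]
  | succ j =>
    have : (Fin.cons (j + 1) t : Fin (m + 1) → ℕ) =
        (fun n => Fin.cons (n 0 + 1) (Fin.tail n)) (Fin.cons j t) := by simp
    rw [this, Fin.injective_cons_succ_tail.mem_set_image, cons_mem_thetaSolutions,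
      thetaSummand_succ, sub_add_eq_sub_sub, sub_right_comm]
    simp [Fin.cons_inj]

theorem ncard_thetaSolutions_fin_succ {m : ℕ} {g : Fin (m + 1) → E}
    (hY : ∀ i, (inner ℝ (g i) Y : ℝ) ≠ 0) (lam : E) :
    (thetaSolutions Y g lam).ncard =
      (thetaSolutions Y (Fin.tail g) (lam - thetaSummand Y (g 0) 0)).ncard +
      (thetaSolutions Y g (lam - polarized Y (g 0))).ncard := by
  have hdisj : Disjoint
      (Fin.cons 0 '' thetaSolutions Y (Fin.tail g) (lam - thetaSummand Y (g 0) 0))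
      ((fun n => Fin.cons (n 0 + 1) (Fin.tail n)) ''
        thetaSolutions Y g (lam - polarized Y (g 0))) := by
    refine Set.disjoint_left.mpr ?_
    rintro _ ⟨t, -, rfl⟩ ⟨n, -, hn⟩
    simpa using congrFun hn 0
  rw [thetaSolutions_fin_succ, Set.ncard_union_eq hdisj
      ((thetaSolutions_finite (fun i : Fin m => hY i.succ) _).image _)
      ((thetaSolutions_finite hY _).image _),
    Set.ncard_image_of_injective _ (Fin.cons_right_injective 0),
    Set.ncard_image_of_injective _ Fin.injective_cons_succ_tail]

theorem theta_cons_sub (φ₀ : E) (Φ : List E) (hY : Polarizing (φ₀ :: Φ) Y) (lam : E) :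
    theta (φ₀ :: Φ) Y lam - theta (φ₀ :: Φ) Y (lam - φ₀) = theta Φ Y lam := by
  have hcard := ncard_thetaSolutions_fin_succ (g := (φ₀ :: Φ).get) (Y := Y)
    fun i => hY _ (List.get_mem (φ₀ :: Φ) i)
  have h0 : (φ₀ :: Φ).get 0 = φ₀ := rfl
  have htail : Fin.tail (φ₀ :: Φ).get = Φ.get := rfl
  simp only [theta_eq_ncard, filterP]
  by_cases hpos : (0 : ℝ) < inner ℝ φ₀ Y
  · have hS := hcard lam
    simp only [h0, htail, thetaSummand, polarized, if_pos hpos, Nat.cast_zero, zero_smul,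
      sub_zero] at hS
    rw [List.filter_cons_of_neg (by simpa using hpos.not_gt), hS]
    push_cast
    ring
  · have hneg : (inner ℝ φ₀ Y : ℝ) < 0 :=
      lt_of_le_of_ne (not_lt.mp hpos) (hY φ₀ List.mem_cons_self)
    have hS := hcard (lam - φ₀)
    simp only [h0, htail, thetaSummand, polarized, if_neg hpos, Nat.cast_zero, zero_add,
      one_smul, sub_neg_eq_add, sub_add_cancel] at hS
    rw [List.filter_cons_of_pos (by simpa using hneg), List.length_cons, hS]
    push_cast
    ring

theorem theta_eq_zero_of_notMem_span (Φ : List E) {lam : E}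
    (h : lam ∉ Submodule.span ℝ {v | v ∈ Φ}) : theta Φ Y lam = 0 := by
  suffices thetaSolutions Y Φ.get lam = ∅ by rw [theta_eq_ncard, this, Set.ncard_empty]; simp
  refine Set.eq_empty_of_forall_notMem fun n hn => h (hn ▸ Submodule.sum_mem _ fun i _ => ?_)
  have hi : Φ.get i ∈ Submodule.span ℝ {v | v ∈ Φ} := Submodule.subset_span (List.get_mem Φ i)
  unfold thetaSummand
  split_ifs
  · exact Submodule.smul_of_tower_mem _ _ hi
  · exact Submodule.neg_mem _ (Submodule.smul_of_tower_mem _ _ hi)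

end Theta

section Topes

variable {E : Type*} [NormedAddCommGroup E] [InnerProductSpace ℝ E] {Φ : List E}

theorem isOpen_setOf_phiRegular (hspan : Submodule.span ℝ {v | v ∈ Φ} = ⊤) :
    IsOpen {x | PhiRegular Φ x} := by
  classical
  set F : Set (Finset E) := {s | ↑s ⊆ {v | v ∈ Φ} ∧
    s.card < finrank ℝ (Submodule.span ℝ {v | v ∈ Φ})}
  have hF : F.Finite := Φ.toFinset.powerset.finite_toSet.subset fun s hs =>
    Finset.mem_powerset.mpr fun v hv => List.mem_toFinset.mpr (hs.1 hv)
  have : {x | PhiRegular Φ x} = (⋃ s ∈ F, (Submodule.span ℝ (s : Set E) : Set E))ᶜ := by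
    ext x
    simp [PhiRegular, hspan, F]
  rw [this]
  exact (hF.isClosed_biUnion fun s _ => Submodule.closed_of_finiteDimensional _).isOpen_compl

theorem PhiRegular.smul {x : E} (h : PhiRegular Φ x) {c : ℝ} (hc : c ≠ 0) :
    PhiRegular Φ (c • x) := by
  refine ⟨Submodule.smul_mem _ c h.1, fun ⟨s, hsΦ, hcard, hcx⟩ => h.2 ⟨s, hsΦ, hcard, ?_⟩⟩
  simpa [hc] using Submodule.smul_mem _ c⁻¹ hcx

theorem PhiRegular.notMem_span {γ : E} (h : PhiRegular Φ γ) {s : Set E}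
    (hs : s ⊆ {v | v ∈ Φ})
    (hrank : finrank ℝ (Submodule.span ℝ s) < finrank ℝ (Submodule.span ℝ {v | v ∈ Φ})) :
    γ ∉ Submodule.span ℝ s := by
  obtain ⟨b, hbs, hspan, hli⟩ := exists_linearIndependent ℝ s
  have hb : b.Finite := Φ.finite_toSet.subset (hbs.trans hs)
  refine fun hγ => h.2 ⟨hb.toFinset, ?_, ?_, ?_⟩
  · simpa using hbs.trans hs
  · rwa [← finrank_span_finset_eq_card (by rw [hb.coe_toFinset]; exact hli), hb.coe_toFinset,
      hspan]
  · rwa [hb.coe_toFinset, hspan]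

namespace IsTope

variable {T : Set E}

theorem subset_setOf_phiRegular (hT : IsTope Φ T) : T ⊆ {x | PhiRegular Φ x} := by
  obtain ⟨γ, -, rfl⟩ := hT
  exact connectedComponentIn_subset _ _

theorem isOpen (hspan : Submodule.span ℝ {v | v ∈ Φ} = ⊤) (hT : IsTope Φ T) : IsOpen T := by
  obtain ⟨γ, -, rfl⟩ := hT
  exact (isOpen_setOf_phiRegular hspan).connectedComponentIn

theorem smul_mem (hT : IsTope Φ T) {x : E} (hx : x ∈ T) {t : ℝ} (ht : 0 < t) : t • x ∈ T := by
  have hreg := hT.subset_setOf_phiRegular hx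
  obtain ⟨γ, -, rfl⟩ := hT
  have hpos : ∀ r ∈ Set.uIcc 1 t, 0 < r := fun r hr =>
    lt_of_lt_of_le (lt_min one_pos ht) hr.1
  have hK : IsPreconnected ((· • x) '' Set.uIcc 1 t) :=
    isPreconnected_uIcc.image _ (continuous_id.smul continuous_const).continuousOn
  have hKreg : (· • x) '' Set.uIcc 1 t ⊆ {y | PhiRegular Φ y} := by
    rintro _ ⟨r, hr, rfl⟩
    exact hreg.smul (hpos r hr).ne'
  rw [connectedComponentIn_eq hx]
  exact hK.subset_connectedComponentIn ⟨1, Set.left_mem_uIcc, one_smul ℝ x⟩ hKreg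
    ⟨t, Set.right_mem_uIcc, rfl⟩

theorem exists_ball_subset (hspan : Submodule.span ℝ {v | v ∈ Φ} = ⊤) (hT : IsTope Φ T)
    (R : ℝ) : ∃ x, Metric.ball x R ⊆ T := by
  obtain ⟨γ, hγ, hTγ⟩ := id hT
  obtain ⟨ε, hε, hball⟩ :=
    Metric.isOpen_iff.mp (hT.isOpen hspan) γ (hTγ ▸ mem_connectedComponentIn hγ)
  set t : ℝ := max 1 (R / ε)
  have ht : 0 < t := lt_max_of_lt_left one_pos
  have hR : R ≤ ‖t‖ * ε := by
    rw [Real.norm_of_nonneg ht.le]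
    exact (div_le_iff₀ hε).mp (le_max_right _ _)
  refine ⟨t • γ, (Metric.ball_subset_ball hR).trans ?_⟩
  rw [← smul_ball ht.ne']
  rintro _ ⟨v, hv, rfl⟩
  exact hT.smul_mem (hball hv) ht

theorem exists_ball_forall_mem_and_sub_mem (hspan : Submodule.span ℝ {v | v ∈ Φ} = ⊤)
    (hT : IsTope Φ T) (w : E) (R : ℝ) :
    ∃ x, ∀ v ∈ Metric.ball x R, v ∈ T ∧ v - w ∈ T := by
  obtain ⟨x, hx⟩ := hT.exists_ball_subset hspan (R + ‖w‖)
  refine ⟨x, fun v hv => ⟨hx (Metric.ball_subset_ball (by simp) hv), hx ?_⟩⟩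
  rw [Metric.mem_ball, dist_eq_norm, sub_right_comm]
  exact (norm_sub_le _ _).trans_lt (by rw [← dist_eq_norm]; linarith [Metric.mem_ball.mp hv])

end IsTope

end Topes

theorem quasiPoly_difference_eq_general
    (Λ : Submodule ℤ V) (hΛ : IsLattice Λ)
    (Φ Φ' : List V) (φ₀ : V) (hperm : Φ.Perm (φ₀ :: Φ'))
    (hΦΛ : ∀ φ ∈ Φ, φ ∈ Λ)
    (hspan : Submodule.span ℝ {v | v ∈ Φ} = ⊤)
    (Y : V) (hY : Polarizing Φ Y)
    (T : Set V) (hT : IsTope Φ T)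
    (q : V → ℂ) (hq : IsQuasiPoly Λ q)
    (hqT : ∀ lam ∈ (Λ : Set V) ∩ T, q lam = (theta Φ Y lam : ℂ)) :
    (Submodule.span ℝ {v | v ∈ Φ'} = ⊤ →
      ∀ T' : Set V, IsTope Φ' T' → T ⊆ T' →
        ∀ q' : V → ℂ, IsQuasiPoly Λ q' →
          (∀ lam ∈ (Λ : Set V) ∩ T', q' lam = (theta Φ' Y lam : ℂ)) →
          ∀ lam ∈ Λ, q lam - q (lam - φ₀) = q' lam) ∧
    (Submodule.span ℝ {v | v ∈ Φ'} ≠ ⊤ →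
      ∀ lam ∈ Λ, q lam - q (lam - φ₀) = 0) := by
  have hφ₀Λ : φ₀ ∈ Λ := hΦΛ φ₀ (hperm.mem_iff.mpr List.mem_cons_self)
  have htheta (lam : V) : theta Φ Y lam - theta Φ Y (lam - φ₀) = theta Φ' Y lam := by
    rw [theta_perm hperm, theta_perm hperm]
    exact theta_cons_sub φ₀ Φ' (fun φ hφ => hY φ (hperm.mem_iff.mpr hφ)) lam
  have key (r : V → ℂ) (hr : IsQuasiPoly Λ r)
      (hrT : ∀ lam ∈ (Λ : Set V) ∩ T, r lam = theta Φ' Y lam) (lam : V) (hlam : lam ∈ Λ) :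
      q lam - q (lam - φ₀) = r lam := by
    refine sub_eq_zero.mp (((hq.sub (hq.comp_sub_const hφ₀Λ)).sub hr).eq_zero_of_forall_ball
      hΛ.1 (fun R => ?_) lam hlam)
    obtain ⟨x, hx⟩ := hT.exists_ball_forall_mem_and_sub_mem hspan φ₀ R
    refine ⟨x, fun v hv hvx => ?_⟩
    obtain ⟨hvT, hvT'⟩ := hx v hvx
    simp only [Pi.sub_apply, hqT v ⟨hv, hvT⟩, hqT _ ⟨Λ.sub_mem hv hφ₀Λ, hvT'⟩, hrT v ⟨hv, hvT⟩,
      ← htheta v]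
    push_cast
    ring
  refine ⟨fun _ T' _ hTT' q' hq' hq'T' =>
      key q' hq' fun lam hlam => hq'T' lam ⟨hlam.1, hTT' hlam.2⟩,
    fun hspan' => key 0 IsQuasiPoly.zero fun lam hlam => ?_⟩
  have hrank : finrank ℝ (Submodule.span ℝ {v | v ∈ Φ'}) <
      finrank ℝ (Submodule.span ℝ {v | v ∈ Φ}) :=
    hspan ▸ finrank_top ℝ V ▸ Submodule.finrank_lt hspan'
  rw [theta_eq_zero_of_notMem_span Φ' ((hT.subset_setOf_phiRegular hlam.2).notMem_span
    (fun v hv => hperm.mem_iff.mpr (List.mem_cons_of_mem _ hv)) hrank)]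
  simp

/-- Wall-crossing of the Dahmen–Micchelli quasi-polynomials: if `q` agrees with `Θ[Φ↑Y]` on the
tope `T` and `Φ' = Φ - {φ₀}`, then (i) if `Φ'` spans `V` and `q'` agrees with `Θ[Φ'↑Y]` on the
`Φ'`-tope `T'` containing `T`, then `q(λ) - q(λ - φ₀) = q'(λ)` on `Λ`; and (ii) if `Φ'` does
not span `V`, then `q(λ) - q(λ - φ₀) = 0` on `Λ`. -/
theorem quasiPoly_difference_eq
    (Λ : Submodule ℤ V) (hΛ : IsLattice Λ)
    (Φ Φ' : List V) (φ₀ : V) (hperm : Φ.Perm (φ₀ :: Φ'))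
    (hΦ0 : ∀ φ ∈ Φ, φ ≠ 0) (hΦΛ : ∀ φ ∈ Φ, φ ∈ Λ)
    (hspan : Submodule.span ℝ {v | v ∈ Φ} = ⊤)
    (Y : V) (hY : Polarizing Φ Y)
    (T : Set V) (hT : IsTope Φ T)
    (q : V → ℂ) (hq : IsQuasiPoly Λ q)
    (hqT : ∀ lam ∈ (Λ : Set V) ∩ T, q lam = (theta Φ Y lam : ℂ)) :
    (Submodule.span ℝ {v | v ∈ Φ'} = ⊤ →
      ∀ T' : Set V, IsTope Φ' T' → T ⊆ T' →
        ∀ q' : V → ℂ, IsQuasiPoly Λ q' →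
          (∀ lam ∈ (Λ : Set V) ∩ T', q' lam = (theta Φ' Y lam : ℂ)) →
          ∀ lam ∈ Λ, q lam - q (lam - φ₀) = q' lam) ∧
    (Submodule.span ℝ {v | v ∈ Φ'} ≠ ⊤ →
      ∀ lam ∈ Λ, q lam - q (lam - φ₀) = 0) :=
  quasiPoly_difference_eq_general Λ hΛ Φ Φ' φ₀ hperm hΦΛ hspan Y hY T hT q hq hqT

end
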